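/- arXiv:1804.07479 — 2 statements merged into one kernel-verified Lean document; each statement's English description precedes it below -/
import Mathlib

section
/- Let H : ℝ^n × ℝ^n → ℝ be smooth and positively homogeneous of degree p ≠ 1 in the second variable, i.e. H(x, λy) = λ^p H(x,y) for all λ > 0. Let φ_t = (φ_t^X, φ_t^Y) denote the Hamiltonian flow of H with respect to the standard symplectic form. Then for any (a,b), the directional derivative of y ↦ φ_1^X(a,y) at b in the direction b equals (p−1)·∇_y H(φ_1(a,b)). -/
open Set Manifold InnerProductSpace

lemma ode_uniq {F : Type*} [NormedAddCommGroup F] [NormedSpace ℝ F]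
    (v : F → F) (hv : ContDiff ℝ 1 v) (γ γ' : ℝ → F)
    (hγ : ∀ t, HasDerivAt γ (v (γ t)) t) (hγ' : ∀ t, HasDerivAt γ' (v (γ' t)) t)
    (t₀ : ℝ) (h : γ t₀ = γ' t₀) : γ = γ' := by
  have key : ∀ (f : ℝ → F), (∀ t, HasDerivAt f (v (f t)) t) →
      IsMIntegralCurve (I := 𝓘(ℝ, F)) f v := by
    intro f hf t
    exact (hasDerivAt_iff_hasFDerivAt.mp (hf t)).hasMFDerivAt
  refine isMIntegralCurve_Ioo_eq_of_contMDiff_boundaryless (t₀ := t₀) ?_ (key γ hγ) (key γ' hγ') h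
  intro x
  refine (Bundle.contMDiffAt_section (E := TangentSpace 𝓘(ℝ, F)) (F := F) (s := v) x).mpr ?_
  have : (fun x' => (trivializationAt F (TangentSpace 𝓘(ℝ, F)) x ⟨x', v x'⟩).2) = v := by
    ext x'
    rw [TangentBundle.trivializationAt_apply]
    simp [chartAt_self_eq]
  rw [this, contMDiffAt_iff_contDiffAt]
  exact hv.contDiffAt

section aux
variable {E : Type*} [NormedAddCommGroup E] [InnerProductSpace ℝ E] [CompleteSpace E]

lemma grad_partial₂ (H : E × E → ℝ) (hd : Differentiable ℝ H) (z : E × E) :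
    gradient (fun y => H (z.1, y)) z.2
      = (toDual ℝ E).symm ((fderiv ℝ H z).comp (ContinuousLinearMap.inr ℝ E E)) := by
  have h : HasFDerivAt (fun y => H (z.1, y))
      ((fderiv ℝ H z).comp (ContinuousLinearMap.inr ℝ E E)) z.2 := by
    have := (hd (z.1, z.2)).hasFDerivAt.comp z.2 (hasFDerivAt_prodMk_right z.1 z.2)
    simpa [Function.comp_def] using this
  rw [gradient, h.fderiv]

lemma grad_partial₁ (H : E × E → ℝ) (hd : Differentiable ℝ H) (z : E × E) :
    gradient (fun x => H (x, z.2)) z.1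
      = (toDual ℝ E).symm ((fderiv ℝ H z).comp (ContinuousLinearMap.inl ℝ E E)) := by
  have h : HasFDerivAt (fun x => H (x, z.2))
      ((fderiv ℝ H z).comp (ContinuousLinearMap.inl ℝ E E)) z.1 := by
    have := (hd (z.1, z.2)).hasFDerivAt.comp (f := fun x => (x, z.2)) z.1 (hasFDerivAt_prodMk_left z.1 z.2)
    simpa [Function.comp_def] using this
  rw [gradient, h.fderiv]

lemma grad_scale (g : E → ℝ) (hg : Differentiable ℝ g) (p : ℝ) (l : ℝ) (hl : 0 < l)
    (hhom : ∀ y, g (l • y) = l ^ p * g y) (y : E) :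
    gradient g (l • y) = l ^ (p - 1) • gradient g y := by
  have hL : HasFDerivAt (fun y' => g (l • y'))
      ((fderiv ℝ g (l • y)).comp (l • ContinuousLinearMap.id ℝ E)) y :=
    (hg (l • y)).hasFDerivAt.comp y ((hasFDerivAt_id y).const_smul l)
  have hR : HasFDerivAt (fun y' => l ^ p * g y') ((l ^ p) • fderiv ℝ g y) y :=
    (hg y).hasFDerivAt.const_mul (l ^ p)
  have heq : (fun y' => g (l • y')) = fun y' => l ^ p * g y' := funext hhom
  rw [heq] at hL
  have h2 : l • fderiv ℝ g (l • y) = (l ^ p) • fderiv ℝ g y := by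
    have := hL.unique hR
    rwa [ContinuousLinearMap.comp_smul, ContinuousLinearMap.comp_id] at this
  have hc : l⁻¹ * l ^ p = l ^ (p - 1) := by
    rw [← Real.rpow_neg_one l, ← Real.rpow_add hl, neg_add_eq_sub]
  have h3 : fderiv ℝ g (l • y) = l ^ (p - 1) • fderiv ℝ g y := by
    have := congrArg (fun L => l⁻¹ • L) h2
    simpa [smul_smul, inv_mul_cancel₀ hl.ne', hc] using this
  rw [gradient, gradient, h3, map_smul]

lemma grad_const_mul (g : E → ℝ) (hg : Differentiable ℝ g) (c : ℝ) (x : E) :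
    gradient (fun x' => c * g x') x = c • gradient g x := by
  rw [gradient, gradient, fderiv_const_mul (hg x), map_smul]

end aux

/-- For a Hamiltonian `H(x,y)` positively homogeneous of degree `p ≠ 1` in `y`, with
standard Hamiltonian flow `φ_t` (so `ẋ = ∇_y H`, `ẏ = −∇_x H`), the directional
derivative of `y ↦ φ_1^X(a,y)` at `b` in direction `b` equals
`(p−1)·∇_y H(φ_1(a,b))`. -/
theorem stmt8 (n : ℕ)
    (H : EuclideanSpace ℝ (Fin n) × EuclideanSpace ℝ (Fin n) → ℝ)
    (hH : ContDiff ℝ (⊤ : ℕ∞) H) (p : ℝ) (hp : p ≠ 1)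
    (hhom : ∀ x y (l : ℝ), 0 < l → H (x, l • y) = l ^ p * H (x, y))
    (φ : ℝ → EuclideanSpace ℝ (Fin n) × EuclideanSpace ℝ (Fin n) →
      EuclideanSpace ℝ (Fin n) × EuclideanSpace ℝ (Fin n))
    (hφ0 : ∀ z, φ 0 z = z)
    (hφ : ∀ t z, HasDerivAt (fun s => φ s z)
      (gradient (fun y => H ((φ t z).1, y)) (φ t z).2,
       -gradient (fun x => H (x, (φ t z).2)) (φ t z).1) t)
    (a b : EuclideanSpace ℝ (Fin n))
    (hdiff : DifferentiableAt ℝ (fun y => (φ 1 (a, y)).1) b) :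
    fderiv ℝ (fun y => (φ 1 (a, y)).1) b b
      = (p - 1) • gradient (fun y => H ((φ 1 (a, b)).1, y)) (φ 1 (a, b)).2 := by
  have hd : Differentiable ℝ H := hH.differentiable (by simp)
  set V : (EuclideanSpace ℝ (Fin n) × EuclideanSpace ℝ (Fin n)) →
      EuclideanSpace ℝ (Fin n) × EuclideanSpace ℝ (Fin n) :=
    fun z => (gradient (fun y => H (z.1, y)) z.2,
      -gradient (fun x => H (x, z.2)) z.1) with hV
  have hφV : ∀ t z, HasDerivAt (fun s => φ s z) (V (φ t z)) t := hφ
  -- smoothness of the vector field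
  have hfd : ContDiff ℝ 1 (fderiv ℝ H) := hH.fderiv_right (by exact WithTop.coe_le_coe.mpr le_top)
  have hVc : ContDiff ℝ 1 V := by
    rw [hV]
    apply ContDiff.prodMk
    · have h1 : (fun z : EuclideanSpace ℝ (Fin n) × EuclideanSpace ℝ (Fin n) =>
          gradient (fun y => H (z.1, y)) z.2)
          = fun z => (toDual ℝ _).symm ((fderiv ℝ H z).comp (ContinuousLinearMap.inr ℝ _ _)) :=
        funext fun z => grad_partial₂ H hd z
      rw [h1]
      exact (toDual ℝ _).symm.contDiff.comp (hfd.clm_comp contDiff_const)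
    · have h2 : (fun z : EuclideanSpace ℝ (Fin n) × EuclideanSpace ℝ (Fin n) =>
          -gradient (fun x => H (x, z.2)) z.1)
          = fun z => -((toDual ℝ _).symm ((fderiv ℝ H z).comp (ContinuousLinearMap.inl ℝ _ _))) := by
        funext z; rw [grad_partial₁ H hd z]
      rw [h2]
      exact ((toDual ℝ _).symm.contDiff.comp (hfd.clm_comp contDiff_const)).neg
  -- scaling of the flow
  have key : ∀ (l : ℝ), 0 < l → (fun t => φ t (a, l • b))
      = fun t => ((φ (l ^ (p - 1) * t) (a, b)).1, l • (φ (l ^ (p - 1) * t) (a, b)).2) := by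
    intro l hl
    set c := l ^ (p - 1) with hc
    have hlc : l * c = l ^ p := by
      have h' := (Real.rpow_add hl 1 (p - 1)).symm
      have h'' : 1 + (p - 1) = p := by ring
      rw [h''] at h'
      simpa [Real.rpow_one, hc] using h'
    apply ode_uniq V hVc _ _ (fun t => hφV t _) ?_ 0 ?_
    · -- the rescaled curve is an integral curve
      intro t
      have hct : HasDerivAt (fun s : ℝ => c * s) c t := by
        simpa using (hasDerivAt_id t).const_mul c
      have hw : HasDerivAt (fun s => φ (c * s) (a, b)) (c • V (φ (c * t) (a, b))) t :=
        HasDerivAt.scomp t (hφV (c * t) (a, b)) hct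
      have h1 : HasDerivAt (fun s => (φ (c * s) (a, b)).1) ((c • V (φ (c * t) (a, b))).1) t := by
        simpa [Function.comp_def] using
          (ContinuousLinearMap.fst ℝ (EuclideanSpace ℝ (Fin n)) (EuclideanSpace ℝ (Fin n))
            ).hasFDerivAt.comp_hasDerivAt t hw
      have h2 : HasDerivAt (fun s => l • (φ (c * s) (a, b)).2)
          (l • (c • V (φ (c * t) (a, b))).2) t := by
        have := ((ContinuousLinearMap.snd ℝ (EuclideanSpace ℝ (Fin n)) (EuclideanSpace ℝ (Fin n))
            ).hasFDerivAt.comp_hasDerivAt t hw).const_smul l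
        exact this
      have hcomb := h1.prodMk h2
      have e1 : gradient (fun y => H ((φ (c * t) (a, b)).1, y)) (l • (φ (c * t) (a, b)).2)
          = c • gradient (fun y => H ((φ (c * t) (a, b)).1, y)) (φ (c * t) (a, b)).2 := by
        exact grad_scale _ (hd.comp ((differentiable_const _).prodMk differentiable_id)) p l hl
          (fun y => hhom _ y l hl) _
      have e2 : gradient (fun x => H (x, l • (φ (c * t) (a, b)).2)) (φ (c * t) (a, b)).1
          = (l ^ p) • gradient (fun x => H (x, (φ (c * t) (a, b)).2)) (φ (c * t) (a, b)).1 := by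
        have hfe : (fun x => H (x, l • (φ (c * t) (a, b)).2))
            = fun x => l ^ p * H (x, (φ (c * t) (a, b)).2) :=
          funext fun x => hhom x _ l hl
        rw [hfe]
        exact grad_const_mul _ (hd.comp (differentiable_id.prodMk (differentiable_const _))) _ _
      have hval : ((c • V (φ (c * t) (a, b))).1, l • (c • V (φ (c * t) (a, b))).2)
          = V ((φ (c * t) (a, b)).1, l • (φ (c * t) (a, b)).2) := by
        rw [hV]
        dsimp only
        rw [e1, e2]
        simp [smul_smul, smul_neg, hlc, mul_comm]
      exact hval ▸ hcomb
    · -- initial condition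
      simp [hφ0, mul_zero]
  -- conclude by differentiating in l at l = 1
  have hfun : (fun l : ℝ => (φ 1 (a, l • b)).1) =ᶠ[nhds 1]
      fun l : ℝ => (φ (l ^ (p - 1)) (a, b)).1 := by
    filter_upwards [eventually_gt_nhds (show (0:ℝ) < 1 by norm_num)] with l hl
    have := congrFun (key l hl) 1
    rw [mul_one] at this
    rw [this]
  have hA : HasDerivAt (fun l : ℝ => (φ 1 (a, l • b)).1)
      (fderiv ℝ (fun y => (φ 1 (a, y)).1) b b) 1 := by
    have hsm : HasDerivAt (fun l : ℝ => l • b) b 1 := by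
      simpa using (hasDerivAt_id (1:ℝ)).smul_const b
    have hfb : HasFDerivAt (fun y => (φ 1 (a, y)).1)
        (fderiv ℝ (fun y => (φ 1 (a, y)).1) b) ((1:ℝ) • b) := by
      rw [one_smul]; exact hdiff.hasFDerivAt
    exact hfb.comp_hasDerivAt 1 hsm
  have hB : HasDerivAt (fun l : ℝ => (φ (l ^ (p - 1)) (a, b)).1)
      ((p - 1) • gradient (fun y => H ((φ 1 (a, b)).1, y)) (φ 1 (a, b)).2) 1 := by
    have hr : HasDerivAt (fun l : ℝ => l ^ (p - 1)) (p - 1) 1 := by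
      simpa using Real.hasDerivAt_rpow_const (x := (1:ℝ)) (p := p - 1) (Or.inl one_ne_zero)
    have hx : HasDerivAt (fun s => (φ s (a, b)).1) ((V (φ 1 (a, b))).1) ((1:ℝ) ^ (p - 1)) := by
      rw [Real.one_rpow]
      simpa [Function.comp_def] using
        (ContinuousLinearMap.fst ℝ (EuclideanSpace ℝ (Fin n)) (EuclideanSpace ℝ (Fin n))
          ).hasFDerivAt.comp_hasDerivAt 1 (hφV 1 (a, b))
    have := HasDerivAt.scomp (1:ℝ) hx hr
    exact this
  exact hA.unique (hB.congr_of_eventuallyEq hfun)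
end

section
/- Let H : ℝ^n × ℝ^n → ℝ be smooth with H(x, λy) = λ^p H(x,y) for all λ > 0, where p ≠ 1, and suppose ∇_y H(x,y) ≠ 0 whenever y ≠ 0. Let φ = φ_1 be the time-1 Hamiltonian flow map and φ^X its x-component. Then for every (a,b) with the y-component of φ(a,b) nonzero, the kernel of the Jacobian D_y φ^X(a,b) : ℝ^n → ℝ^n has dimension at most n−1. -/
open Set Metric InnerProductSpace

noncomputable section AuxStmt9

variable {E : Type*} [NormedAddCommGroup E] [InnerProductSpace ℝ E] [CompleteSpace E]

private lemma gradH_fst_eq' (H : E × E → ℝ) (hH : Differentiable ℝ H) (x y : E) :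
    gradient (fun y' => H (x, y')) y
      = (toDual ℝ E).symm ((fderiv ℝ H (x, y)).comp (ContinuousLinearMap.inr ℝ E E)) :=
  (((hH (x, y)).hasFDerivAt.comp y (hasFDerivAt_prodMk_right x y)).hasGradientAt).gradient

private lemma gradH_snd_eq' (H : E × E → ℝ) (hH : Differentiable ℝ H) (x y : E) :
    gradient (fun x' => H (x', y)) x
      = (toDual ℝ E).symm ((fderiv ℝ H (x, y)).comp (ContinuousLinearMap.inl ℝ E E)) :=
  (((hH (x, y)).hasFDerivAt.comp x (hasFDerivAt_prodMk_left x y)).hasGradientAt).gradient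

private lemma toDual_symm_smul' (c : ℝ) (u : StrongDual ℝ E) :
    (toDual ℝ E).symm (c • u) = c • (toDual ℝ E).symm u := by
  simp [map_smulₛₗ, starRingEnd_apply, star_trivial]

omit [CompleteSpace E] in
private lemma exists_lipschitzOnWith_closedBall' {X Y : Type*} [NormedAddCommGroup X]
    [NormedSpace ℝ X] [ProperSpace X] [NormedAddCommGroup Y] [NormedSpace ℝ Y]
    {f : X → Y} (hf : ContDiff ℝ 1 f) (R : ℝ) :
    ∃ K : NNReal, LipschitzOnWith K f (closedBall (0 : X) R) := by
  obtain ⟨C, hC⟩ := (isCompact_closedBall (0 : X) R).exists_bound_of_continuousOn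
    ((hf.continuous_fderiv one_ne_zero).continuousOn)
  refine ⟨C.toNNReal, (convex_closedBall _ _).lipschitzOnWith_of_nnnorm_hasFDerivWithin_le
    (fun z _ => ((hf.differentiable one_ne_zero) z).hasFDerivAt.hasFDerivWithinAt)
    (fun z hz => ?_)⟩
  rw [← norm_toNNReal]
  exact Real.toNNReal_mono (hC z hz)

omit [CompleteSpace E] in
private lemma fderiv_partial_fst' (H : E × E → ℝ) (hH : Differentiable ℝ H) (x y : E) :
    fderiv ℝ (fun y' => H (x, y')) y
      = (fderiv ℝ H (x, y)).comp (ContinuousLinearMap.inr ℝ E E) :=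
  ((hH (x, y)).hasFDerivAt.comp y (hasFDerivAt_prodMk_right x y)).fderiv

omit [CompleteSpace E] in
private lemma fderiv_partial_snd' (H : E × E → ℝ) (hH : Differentiable ℝ H) (x y : E) :
    fderiv ℝ (fun x' => H (x', y)) x
      = (fderiv ℝ H (x, y)).comp (ContinuousLinearMap.inl ℝ E E) :=
  ((hH (x, y)).hasFDerivAt.comp x (hasFDerivAt_prodMk_left x y)).fderiv

omit [CompleteSpace E] in
private lemma fderiv_inr_smul' (H : E × E → ℝ) (hH : Differentiable ℝ H) (p : ℝ)
    (hhom : ∀ x y (l : ℝ), 0 < l → H (x, l • y) = l ^ p * H (x, y))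
    (x y : E) (l : ℝ) (hl : 0 < l) :
    (fderiv ℝ H (x, l • y)).comp (ContinuousLinearMap.inr ℝ E E)
      = l ^ (p - 1) • (fderiv ℝ H (x, y)).comp (ContinuousLinearMap.inr ℝ E E) := by
  have hsm : HasFDerivAt (fun y' : E => l • y') (l • ContinuousLinearMap.id ℝ E) y :=
    (hasFDerivAt_id y).const_smul l
  have hu : HasFDerivAt (fun y' : E => H (x, y'))
      ((fderiv ℝ H (x, l • y)).comp (ContinuousLinearMap.inr ℝ E E)) (l • y) :=
    (hH (x, l • y)).hasFDerivAt.comp (l • y) (hasFDerivAt_prodMk_right x (l • y))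
  have h1 : fderiv ℝ (fun y' : E => H (x, l • y')) y
      = l • ((fderiv ℝ H (x, l • y)).comp (ContinuousLinearMap.inr ℝ E E)) := by
    have hcomp : HasFDerivAt (fun y' : E => H (x, l • y'))
        (((fderiv ℝ H (x, l • y)).comp (ContinuousLinearMap.inr ℝ E E)).comp
          (l • ContinuousLinearMap.id ℝ E)) y := hu.comp y hsm
    rw [hcomp.fderiv]
    ext v
    simp [mul_comm]
  have h2 : fderiv ℝ (fun y' : E => H (x, l • y')) y
      = l ^ p • ((fderiv ℝ H (x, y)).comp (ContinuousLinearMap.inr ℝ E E)) := by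
    have hfun : (fun y' : E => H (x, l • y')) = fun y' : E => l ^ p * H (x, y') := by
      funext y'; exact hhom x y' l hl
    rw [hfun, fderiv_const_mul, fderiv_partial_fst' H hH x y]
    exact ((hH (x, y)).hasFDerivAt.comp y (hasFDerivAt_prodMk_right x y)).differentiableAt
  have hiff : l • ((fderiv ℝ H (x, l • y)).comp (ContinuousLinearMap.inr ℝ E E))
      = l ^ p • ((fderiv ℝ H (x, y)).comp (ContinuousLinearMap.inr ℝ E E)) := by
    rw [← h1, h2]
  have hln : l ≠ 0 := ne_of_gt hl
  have hres : (fderiv ℝ H (x, l • y)).comp (ContinuousLinearMap.inr ℝ E E)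
      = (l⁻¹ * l ^ p) • ((fderiv ℝ H (x, y)).comp (ContinuousLinearMap.inr ℝ E E)) := by
    rw [mul_smul, ← hiff, inv_smul_smul₀ hln]
  rw [hres]
  congr 1
  rw [Real.rpow_sub hl, Real.rpow_one, div_eq_inv_mul]

omit [CompleteSpace E] in
private lemma fderiv_inl_smul' (H : E × E → ℝ) (hH : Differentiable ℝ H) (p : ℝ)
    (hhom : ∀ x y (l : ℝ), 0 < l → H (x, l • y) = l ^ p * H (x, y))
    (x y : E) (l : ℝ) (hl : 0 < l) :
    (fderiv ℝ H (x, l • y)).comp (ContinuousLinearMap.inl ℝ E E)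
      = l ^ p • (fderiv ℝ H (x, y)).comp (ContinuousLinearMap.inl ℝ E E) := by
  rw [← fderiv_partial_snd' H hH x (l • y), ← fderiv_partial_snd' H hH x y]
  have hfun : (fun x' : E => H (x', l • y)) = fun x' : E => l ^ p * H (x', y) := by
    funext x'; exact hhom x' y l hl
  rw [hfun, fderiv_const_mul]
  exact ((hH (x, y)).hasFDerivAt.comp x (hasFDerivAt_prodMk_left x y)).differentiableAt

/-- The Hamiltonian vector field. -/
private def ham (H : E × E → ℝ) : E × E → E × E :=
  fun z => (gradient (fun y => H (z.1, y)) z.2, -gradient (fun x => H (x, z.2)) z.1)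

private lemma ham_fst_smul (H : E × E → ℝ) (hH : Differentiable ℝ H) (p : ℝ)
    (hhom : ∀ x y (l : ℝ), 0 < l → H (x, l • y) = l ^ p * H (x, y))
    (x y : E) (l : ℝ) (hl : 0 < l) :
    (ham H (x, l • y)).1 = l ^ (p - 1) • (ham H (x, y)).1 := by
  show gradient (fun y' => H (x, y')) (l • y) = l ^ (p - 1) • gradient (fun y' => H (x, y')) y
  rw [gradH_fst_eq' H hH x (l • y), gradH_fst_eq' H hH x y,
    fderiv_inr_smul' H hH p hhom x y l hl, toDual_symm_smul']

private lemma ham_snd_smul (H : E × E → ℝ) (hH : Differentiable ℝ H) (p : ℝ)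
    (hhom : ∀ x y (l : ℝ), 0 < l → H (x, l • y) = l ^ p * H (x, y))
    (x y : E) (l : ℝ) (hl : 0 < l) :
    (ham H (x, l • y)).2 = l ^ p • (ham H (x, y)).2 := by
  show -gradient (fun x' => H (x', l • y)) x = l ^ p • -gradient (fun x' => H (x', y)) x
  rw [gradH_snd_eq' H hH x (l • y), gradH_snd_eq' H hH x y,
    fderiv_inl_smul' H hH p hhom x y l hl, toDual_symm_smul', smul_neg]

private def dualSymmCLM : (StrongDual ℝ E) →L[ℝ] E :=
  LinearMap.mkContinuous
    { toFun := fun u => (toDual ℝ E).symm u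
      map_add' := fun u v => by simp
      map_smul' := fun c u => by simp [toDual_symm_smul'] }
    1 (fun u => by simp)

@[simp] private lemma dualSymmCLM_apply (u : StrongDual ℝ E) :
    dualSymmCLM u = (toDual ℝ E).symm u := rfl

private lemma ham_contDiff (H : E × E → ℝ) (hH : ContDiff ℝ (⊤ : ℕ∞) H) :
    ContDiff ℝ 1 (ham H) := by
  have Hd : Differentiable ℝ H := hH.differentiable (by simp)
  have hf1 : ContDiff ℝ 1 (fderiv ℝ H) := hH.fderiv_right (by exact WithTop.coe_le_coe.mpr le_top)
  have h1 : ContDiff ℝ 1 fun z : E × E =>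
      (fderiv ℝ H z).comp (ContinuousLinearMap.inr ℝ E E) := hf1.clm_comp contDiff_const
  have h2 : ContDiff ℝ 1 fun z : E × E =>
      (fderiv ℝ H z).comp (ContinuousLinearMap.inl ℝ E E) := hf1.clm_comp contDiff_const
  have hc : ContDiff ℝ 1 fun z : E × E =>
      ((dualSymmCLM ((fderiv ℝ H z).comp (ContinuousLinearMap.inr ℝ E E)) : E),
        -(dualSymmCLM ((fderiv ℝ H z).comp (ContinuousLinearMap.inl ℝ E E)) : E)) :=
    (dualSymmCLM.contDiff.comp h1).prodMk (dualSymmCLM.contDiff.comp h2).neg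
  have heq : ham H = fun z : E × E =>
      ((dualSymmCLM ((fderiv ℝ H z).comp (ContinuousLinearMap.inr ℝ E E)) : E),
        -(dualSymmCLM ((fderiv ℝ H z).comp (ContinuousLinearMap.inl ℝ E E)) : E)) := by
    funext z
    obtain ⟨z1, z2⟩ := z
    show (gradient (fun y => H (z1, y)) z2, -gradient (fun x => H (x, z2)) z1) = _
    rw [gradH_fst_eq' H Hd z1 z2, gradH_snd_eq' H Hd z1 z2]
    rfl
  rw [heq]
  exact hc

private lemma ham_lipschitz [FiniteDimensional ℝ E] (H : E × E → ℝ) (hH : ContDiff ℝ (⊤ : ℕ∞) H)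
    (R : ℝ) : ∃ K : NNReal, LipschitzOnWith K (ham H) (closedBall (0 : E × E) R) :=
  exists_lipschitzOnWith_closedBall' (ham_contDiff H hH) R

end AuxStmt9

/-- For `H(x,y)` positively homogeneous of degree `p ≠ 1` in `y` with `∇_y H(x,y) ≠ 0`
for `y ≠ 0`, and `φ = φ_1` the time-1 Hamiltonian flow map with x-component `φ^X`:
at every `(a,b)` where the y-component of `φ(a,b)` is nonzero, the kernel of
`D_y φ^X(a,b)` has dimension at most `n−1`. -/
theorem stmt9 (n : ℕ)
    (H : EuclideanSpace ℝ (Fin n) × EuclideanSpace ℝ (Fin n) → ℝ)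
    (hH : ContDiff ℝ (⊤ : ℕ∞) H) (p : ℝ) (hp : p ≠ 1)
    (hhom : ∀ x y (l : ℝ), 0 < l → H (x, l • y) = l ^ p * H (x, y))
    (hgrad : ∀ x y, y ≠ 0 → gradient (fun y' => H (x, y')) y ≠ 0)
    (φ : ℝ → EuclideanSpace ℝ (Fin n) × EuclideanSpace ℝ (Fin n) →
      EuclideanSpace ℝ (Fin n) × EuclideanSpace ℝ (Fin n))
    (hφ0 : ∀ z, φ 0 z = z)
    (hφ : ∀ t z, HasDerivAt (fun s => φ s z)
      (gradient (fun y => H ((φ t z).1, y)) (φ t z).2,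
       -gradient (fun x => H (x, (φ t z).2)) (φ t z).1) t)
    (a b : EuclideanSpace ℝ (Fin n))
    (hdiff : DifferentiableAt ℝ (fun y => (φ 1 (a, y)).1) b)
    (hY : (φ 1 (a, b)).2 ≠ 0) :
    Module.finrank ℝ (LinearMap.ker (fderiv ℝ (fun y => (φ 1 (a, y)).1) b).toLinearMap) ≤ n - 1 := by
  have Hd : Differentiable ℝ H := hH.differentiable (by simp)
  have hφ' : ∀ t z, HasDerivAt (fun s => φ s z) (ham H (φ t z)) t := hφ
  -- the key scaling identity
  have key : ∀ l : ℝ, 0 < l →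
      φ 1 (a, l • b) = ((φ (l ^ (p - 1)) (a, b)).1, l • (φ (l ^ (p - 1)) (a, b)).2) := by
    intro l hl
    set c := l ^ (p - 1) with hc
    set w : ℝ → EuclideanSpace ℝ (Fin n) × EuclideanSpace ℝ (Fin n) :=
      fun t => φ (c * t) (a, b) with hw
    set δ : ℝ → EuclideanSpace ℝ (Fin n) × EuclideanSpace ℝ (Fin n) :=
      fun t => ((w t).1, l • (w t).2) with hδ
    have hw' : ∀ t, HasDerivAt w (c • ham H (w t)) t := by
      intro t
      have hmul : HasDerivAt (fun s : ℝ => c * s) c t := by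
        simpa using (hasDerivAt_id t).const_mul c
      exact (hφ' (c * t) (a, b)).scomp t hmul
    have hδ' : ∀ t, HasDerivAt δ (ham H (δ t)) t := by
      intro t
      have h1 : HasDerivAt (fun t => (w t).1) ((c • ham H (w t)).1) t := by
        have := ((ContinuousLinearMap.fst ℝ (EuclideanSpace ℝ (Fin n))
          (EuclideanSpace ℝ (Fin n))).hasFDerivAt
          (x := w t)).comp_hasDerivAt t (hw' t)
        simpa [Function.comp_def] using this
      have h2 : HasDerivAt (fun t => (w t).2) ((c • ham H (w t)).2) t := by
        have := ((ContinuousLinearMap.snd ℝ (EuclideanSpace ℝ (Fin n))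
          (EuclideanSpace ℝ (Fin n))).hasFDerivAt
          (x := w t)).comp_hasDerivAt t (hw' t)
        simpa [Function.comp_def] using this
      have h2' : HasDerivAt (fun t => l • (w t).2) (l • (c • ham H (w t)).2) t :=
        h2.const_smul l
      have hcomb := h1.prodMk h2'
      have e1 : (ham H (δ t)).1 = (c • ham H (w t)).1 := by
        have := ham_fst_smul H Hd p hhom (w t).1 (w t).2 l hl
        simpa [hδ] using this
      have e2 : (ham H (δ t)).2 = l • (c • ham H (w t)).2 := by
        have h3 := ham_snd_smul H Hd p hhom (w t).1 (w t).2 l hl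
        have hlp : l ^ p = l * c := by
          have h4 : l ^ (1:ℝ) * l ^ (p - 1) = l ^ ((1:ℝ) + (p - 1)) := (Real.rpow_add hl 1 (p - 1)).symm
          rw [Real.rpow_one] at h4
          rw [hc, h4]
          congr 1
          ring
        have : (ham H ((w t).1, l • (w t).2)).2 = (l * c) • (ham H (w t)).2 := by
          rw [h3, hlp]
        simpa [hδ, smul_smul] using this
      have heq : ham H (δ t) = ((c • ham H (w t)).1, l • (c • ham H (w t)).2) := by
        rw [← e1, ← e2]
      rw [heq]
      exact hcomb
    -- uniqueness of ODE solutions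
    have hfc : Continuous (fun t => φ t (a, l • b)) :=
      continuous_iff_continuousAt.mpr fun t => (hφ' t (a, l • b)).continuousAt
    have hδc : Continuous δ :=
      continuous_iff_continuousAt.mpr fun t => (hδ' t).continuousAt
    obtain ⟨R1, hR1⟩ := (isCompact_Icc (a := (-1:ℝ)) (b := 2)).exists_bound_of_continuousOn
      hfc.continuousOn
    obtain ⟨R2, hR2⟩ := (isCompact_Icc (a := (-1:ℝ)) (b := 2)).exists_bound_of_continuousOn
      hδc.continuousOn
    set R := max R1 R2 with hR
    obtain ⟨K, hK⟩ := ham_lipschitz H hH R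
    have huniq : EqOn (fun t => φ t (a, l • b)) δ (Icc (-1 : ℝ) 2) := by
      apply ODE_solution_unique_of_mem_Icc (v := fun _ => ham H)
        (s := fun _ => closedBall (0 : EuclideanSpace ℝ (Fin n) × EuclideanSpace ℝ (Fin n)) R)
        (K := K) (fun _ _ => hK) (t₀ := 0) ⟨by norm_num, by norm_num⟩
        hfc.continuousOn (fun t _ => hφ' t (a, l • b))
        (fun t ht => by
          rw [mem_closedBall_zero_iff]
          exact le_trans (hR1 _ (Ioo_subset_Icc_self ht)) (le_max_left _ _))
        hδc.continuousOn (fun t _ => hδ' t)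
        (fun t ht => by
          rw [mem_closedBall_zero_iff]
          exact le_trans (hR2 _ (Ioo_subset_Icc_self ht)) (le_max_right _ _))
        (by simp [hδ, hw, hφ0])
    have h1mem : (1 : ℝ) ∈ Icc (-1 : ℝ) 2 := by norm_num
    have := huniq h1mem
    simpa [hδ, hw] using this
  -- differentiate both sides of the scaling identity at l = 1
  set D := fderiv ℝ (fun y => (φ 1 (a, y)).1) b with hD
  set G1 := (ham H (φ 1 (a, b))).1 with hG1
  have hψ : HasDerivAt (fun l : ℝ => (φ (l ^ (p - 1)) (a, b)).1) ((p - 1) • G1) 1 := by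
    have h1 : HasDerivAt (fun t => (φ t (a, b)).1) G1 1 := by
      have := ((ContinuousLinearMap.fst ℝ (EuclideanSpace ℝ (Fin n))
        (EuclideanSpace ℝ (Fin n))).hasFDerivAt
        (x := φ 1 (a, b))).comp_hasDerivAt 1 (hφ' 1 (a, b))
      simpa [Function.comp_def, hG1] using this
    have h2 : HasDerivAt (fun l : ℝ => l ^ (p - 1)) (p - 1) 1 := by
      simpa using Real.hasDerivAt_rpow_const (x := 1) (p := p - 1) (Or.inl one_ne_zero)
    have := h1.scomp_of_eq 1 h2 (Real.one_rpow _).symm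
    exact this
  have hχ : HasDerivAt (fun l : ℝ => (φ 1 (a, l • b)).1) (D b) 1 := by
    have hb1 : HasDerivAt (fun l : ℝ => l • b) b 1 := by
      simpa using (hasDerivAt_id (1 : ℝ)).smul_const b
    have hdiff' : HasFDerivAt (fun y => (φ 1 (a, y)).1) D ((1 : ℝ) • b) := by
      rw [one_smul]
      exact hdiff.hasFDerivAt
    exact hdiff'.comp_hasDerivAt 1 hb1
  have heq2 : (fun l : ℝ => (φ 1 (a, l • b)).1)
      =ᶠ[nhds 1] (fun l : ℝ => (φ (l ^ (p - 1)) (a, b)).1) := by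
    filter_upwards [Ioi_mem_nhds (by norm_num : (0 : ℝ) < 1)] with l hl
    have := congrArg Prod.fst (key l hl)
    simpa using this
  have hψ' : HasDerivAt (fun l : ℝ => (φ 1 (a, l • b)).1) ((p - 1) • G1) 1 :=
    hψ.congr_of_eventuallyEq heq2
  have hDb : D b = (p - 1) • G1 := hχ.unique hψ'
  have hG1ne : G1 ≠ 0 := hgrad (φ 1 (a, b)).1 (φ 1 (a, b)).2 hY
  have hDbne : D b ≠ 0 := by
    rw [hDb]
    exact smul_ne_zero (sub_ne_zero.mpr hp) hG1ne
  have hbk : b ∉ LinearMap.ker D.toLinearMap := fun h => hDbne (LinearMap.mem_ker.mp h)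
  have hne : LinearMap.ker D.toLinearMap ≠ ⊤ := fun h => hbk (h ▸ Submodule.mem_top)
  have hlt : Module.finrank ℝ (LinearMap.ker D.toLinearMap)
      < Module.finrank ℝ (EuclideanSpace ℝ (Fin n)) :=
    Submodule.finrank_lt hne
  rw [finrank_euclideanSpace_fin] at hlt
  omega
end
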